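/- arXiv:1412.0972 — 3 statements merged into one kernel-verified Lean document; each statement's English description precedes it below -/
import Mathlib

section
/- Let V be a finite set, G=(V,E) a decomposable undirected graph with clique set 𝒞 and separator multiset 𝒮, and let 𝔭 be the parent function of a moral DAG with skeleton G that admits a 𝔭-perfect ordering of the cliques. Then: (i) every clique of G equals 𝔮_v for some v∈V, i.e. 𝒞 ⊆ {𝔮_v : v∈V}; (ii) the separator multiset 𝒮 is contained in the multiset {𝔭_v : v∈V}; (iii) the multiset difference {𝔭_v : v∈V} ∖ 𝒮 equals the set difference {𝔮_v : v∈V} ∖ 𝒞, and every set occurring in {𝔭_v : v∈V} ∖ 𝒮 occurs there at most once. -/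
open MeasureTheory ProbabilityTheory Finset

noncomputable section
open scoped Classical

namespace PDir

variable {V : Type} [Fintype V] [DecidableEq V]

/-- ascending factorial (Pochhammer symbol) `a(a+1)⋯(a+s−1)`. -/
def ascFac (a : ℝ) (s : ℕ) : ℝ := ∏ j ∈ Finset.range s, (a + j)

/-! ### Graph-theoretic notions -/

/-- A clique: a maximal complete subset of the vertices. -/
def IsMaxClique (G : SimpleGraph V) (C : Finset V) : Prop :=
  G.IsClique (C : Set V) ∧ ∀ D : Finset V, G.IsClique (D : Set V) → C ⊆ D → C = D

/-- `𝔮_v = {v} ∪ 𝔭_v`. -/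
def q (par : V → Finset V) (v : V) : Finset V := insert v (par v)

/-- `par` is the parent function of a moral DAG with skeleton `G`. -/
structure IsMoralDAG (G : SimpleGraph V) (par : V → Finset V) : Prop where
  mem_adj : ∀ u v, u ∈ par v → G.Adj u v
  adj_mem : ∀ u v, G.Adj u v → u ∈ par v ∨ v ∈ par u
  asymm : ∀ u v, u ∈ par v → v ∉ par u
  acyclic : ∃ f : V → ℕ, ∀ u v, u ∈ par v → f u < f v
  moral : ∀ v, G.IsClique ((q par v : Finset V) : Set V)

/-- An enumeration (ordering) of the cliques of `G`. -/
structure CliqueEnum (G : SimpleGraph V) (K : ℕ) where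
  C : Fin K → Finset V
  inj : Function.Injective C
  max : ∀ l, IsMaxClique G (C l)
  surj : ∀ D : Finset V, IsMaxClique G D → ∃ l, C l = D

/-- The `l`-th separator `S_l = C_l ∩ (C_1 ∪ ⋯ ∪ C_{l-1})`. -/
def CliqueEnum.sep {G : SimpleGraph V} {K : ℕ} (o : CliqueEnum G K) (l : Fin K) : Finset V :=
  o.C l ∩ (Finset.univ.filter (fun j => j < l)).biUnion o.C

/-- A perfect ordering of the cliques. -/
def CliqueEnum.Perfect {G : SimpleGraph V} {K : ℕ} (o : CliqueEnum G K) : Prop :=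
  ∀ l : Fin K, (0 : ℕ) < (l : ℕ) → ∃ j : Fin K, j < l ∧ o.sep l ⊆ o.C j

/-- A `𝔭`-perfect ordering of the cliques. -/
def CliqueEnum.PPerfect {G : SimpleGraph V} {K : ℕ} (o : CliqueEnum G K)
    (par : V → Finset V) : Prop :=
  o.Perfect ∧ ∀ l : Fin K, ∃ v ∈ o.C l \ o.sep l, par v = o.sep l

/-- `S →ₒ C` : the separator `S` and the clique `C` are paired by the ordering `o`. -/
def CliqueEnum.Pairs {G : SimpleGraph V} {K : ℕ} (o : CliqueEnum G K)
    (S C : Finset V) : Prop :=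
  ∃ l : Fin K, o.sep l = S ∧ o.C l = C

/-- Decomposability, via the equivalent characterization: the cliques admit a
perfect ordering (Lauritzen, Prop. 2.17). -/
def Decomposable (G : SimpleGraph V) : Prop :=
  ∃ (K : ℕ) (o : CliqueEnum G K), o.Perfect

/-- `𝔔 = ⋂_{𝔭∈Ps} {𝔮_v : v ∈ V}` (as a set of subsets). -/
def Qfam (Ps : Finset (V → Finset V)) : Finset (Finset V) :=
  Finset.univ.filter (fun A => ∀ par ∈ Ps, ∃ v, q par v = A)

/-- `ℜ = 𝔔 ∖ 𝒞`. -/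
def Rfam (G : SimpleGraph V) (Ps : Finset (V → Finset V)) : Finset (Finset V) :=
  (Qfam Ps).filter (fun A => ¬ IsMaxClique G A)

/-- The chain `S = Q_{j_C} ⊊ Q_{j_C - 1} ⊊ ⋯ ⊊ Q_1 ⊊ Q_0 = C` whose intermediate
elements enumerate the members of `ℜ` contained in `C`. -/
def IsSepChain (ℜ : Finset (Finset V)) (S C : Finset V) (jC : ℕ) (Q : ℕ → Finset V) : Prop :=
  Q 0 = C ∧ Q jC = S ∧ (∀ i, i < jC → Q (i + 1) ⊂ Q i) ∧
  ∀ B : Finset V, (B ∈ ℜ ∧ B ⊆ C) ↔ ∃ i, 0 < i ∧ i < jC ∧ Q i = B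

/-! ### Cells, marginals, conditionals -/

variable (ι : V → Type) [∀ v, Fintype (ι v)] [∀ v, DecidableEq (ι v)]

/-- A cell of the full contingency table. -/
abbrev Cell : Type := ∀ v : V, ι v

/-- A `D`-marginal cell. -/
abbrev CellOn (D : Finset V) : Type := ∀ v : {x : V // x ∈ D}, ι v.1

def restrict (D : Finset V) (i : Cell ι) : CellOn ι D := fun v => i v.1

/-- `D`-marginal of a table of reals. -/
def marg (p : Cell ι → ℝ) (D : Finset V) (n : CellOn ι D) : ℝ :=
  ∑ j : Cell ι, if restrict ι D j = n then p j else 0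

/-- `D`-marginal of a table of counts. -/
def margCount (r : Cell ι → ℕ) (D : Finset V) (n : CellOn ι D) : ℕ :=
  ∑ j : Cell ι, if restrict ι D j = n then r j else 0

/-- `B`-marginal of a parameter family indexed by cells on `A ⊇ B`. -/
def margParam (A B : Finset V) (ν : CellOn ι A → ℝ) (n : CellOn ι B) : ℝ :=
  ∑ m : CellOn ι A,
    if (∀ (w : V) (hB : w ∈ B) (hA : w ∈ A), m ⟨w, hA⟩ = n ⟨w, hB⟩) then ν m else 0

/-- Extension of a `𝔭_v`-cell `k` by the value `m` at `v`, giving a `𝔮_v`-cell `(k, m)`. -/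
def qcell (par : V → Finset V) (v : V) (k : CellOn ι (par v)) (m : ι v) :
    CellOn ι (q par v) :=
  fun w => if h : (w : V) = v then cast (congrArg ι h).symm m
    else k ⟨w.1, by
      have hw := w.2
      simp only [q, Finset.mem_insert] at hw
      exact hw.resolve_left h⟩

/-- The conditional probability `𝐩^{v|𝔭_v}_{m|k} = 𝐩^{𝔮_v}((k,m)) / 𝐩^{𝔭_v}(k)`. -/
def condp (p : Cell ι → ℝ) (par : V → Finset V) (v : V) (k : CellOn ι (par v)) (m : ι v) : ℝ :=
  marg ι p (q par v) (qcell ι par v k m) / marg ι p (par v) k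

/-- Combine a `B`-cell and an `(A∖B)`-cell into an `A`-cell. -/
def glue (A B : Finset V) (k : CellOn ι B) (m : CellOn ι (A \ B)) : CellOn ι A :=
  fun w => if h : (w : V) ∈ B then k ⟨w.1, h⟩ else m ⟨w.1, Finset.mem_sdiff.mpr ⟨w.2, h⟩⟩

/-- The conditional probability `𝐩^{A}((k,m)) / 𝐩^{B}(k)` for `B ⊆ A`,
`k ∈ ℐ_B`, `m ∈ ℐ_{A∖B}`. -/
def condRatio (p : Cell ι → ℝ) (A B : Finset V) (k : CellOn ι B) (m : CellOn ι (A \ B)) : ℝ :=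
  marg ι p A (glue ι A B k m) / marg ι p B k

/-- Transport of a cell along an equality of index sets. -/
def recell {A B : Finset V} (h : A = B) (n : CellOn ι B) : CellOn ι A :=
  fun w => n ⟨w.1, h ▸ w.2⟩

def singleCell (u : V) (k : ι u) : CellOn ι {u} :=
  fun w => cast (congrArg ι (Finset.mem_singleton.mp w.2)).symm k

def pairCell (u w : V) (k : ι u) (l : ι w) : CellOn ι ({u, w} : Finset V) :=
  fun x => if h : (x : V) = u then cast (congrArg ι h).symm k
    else cast (congrArg ι (Finset.mem_singleton.mp
      ((Finset.mem_insert.mp x.2).resolve_left h))).symm l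

/-! ### Probabilistic notions -/

variable {Ω : Type} [MeasurableSpace Ω]

/-- `𝐩` is a random vector of cell probabilities: measurable entries, a.s. positive
and summing to one. -/
def IsRandProb (μpr : Measure Ω) (p : Ω → Cell ι → ℝ) : Prop :=
  (∀ i, Measurable fun ω => p ω i) ∧
  ∀ᵐ ω ∂μpr, (∀ i, 0 < p ω i) ∧ (∑ i, p ω i) = 1

/-- `𝐩` is associated with (factorizes according to) `G`, the cliques and separators
being recorded by the perfect ordering `o`. -/
def AssocWith (μpr : Measure Ω) (p : Ω → Cell ι → ℝ) {G : SimpleGraph V} {K : ℕ}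
    (o : CliqueEnum G K) : Prop :=
  ∀ᵐ ω ∂μpr, ∀ i : Cell ι,
    p ω i * ∏ l : Fin K, marg ι (p ω) (o.sep l) (restrict ι (o.sep l) i) =
      ∏ l : Fin K, marg ι (p ω) (o.C l) (restrict ι (o.C l) i)

/-- Local and global parameter independence of `𝐩` with respect to the DAG `𝔭`:
the random vectors `(𝐩^{v|𝔭_v}_{·|k})`, `k ∈ ℐ_{𝔭_v}`, `v ∈ V`, are mutually independent. -/
def ParamIndep (μpr : Measure Ω) (p : Ω → Cell ι → ℝ) (par : V → Finset V) : Prop :=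
  iIndepFun
    (fun (x : Σ v : V, CellOn ι (par v)) (ω : Ω) => fun m : ι x.1 => condp ι (p ω) par x.1 x.2 m)
    μpr

/-- A random object is non-degenerate if it is not a.s. constant. -/
def Nondeg {α : Type} (μpr : Measure Ω) (f : Ω → α) : Prop :=
  ¬ ∃ c : α, ∀ᵐ ω ∂μpr, f ω = c

/-- A random vector `q` satisfies the Dirichlet moment identities with (positive)
parameters `β`. -/
def DirMoments {M : Type} [Fintype M] (μpr : Measure Ω) (qv : Ω → M → ℝ) (β : M → ℝ) : Prop :=
  (∀ m, 0 < β m) ∧ ∀ z : M → ℕ,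
    (∫ ω, ∏ m, (qv ω m) ^ (z m) ∂μpr) =
      (∏ m, ascFac (β m) (z m)) / ascFac (∑ m, β m) (∑ m, z m)

/-- `𝐩` has the `𝔭`-Dirichlet distribution with parameters `α`. -/
def IsPDirichlet (μpr : Measure Ω) (p : Ω → Cell ι → ℝ) (par : V → Finset V)
    (α : (v : V) → CellOn ι (par v) → ι v → ℝ) : Prop :=
  (∀ᵐ ω ∂μpr, ∀ i : Cell ι,
      p ω i = ∏ v, condp ι (p ω) par v (restrict ι (par v) i) (i v)) ∧
  ParamIndep ι μpr p par ∧
  ∀ (v : V) (k : CellOn ι (par v)), DirMoments μpr (fun ω => condp ι (p ω) par v k) (α v k)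

/-- The moment `E ∏_i 𝐩(i)^{r_i}`. -/
def moment (μpr : Measure Ω) (p : Ω → Cell ι → ℝ) (r : Cell ι → ℕ) : ℝ :=
  ∫ ω, ∏ i : Cell ι, (p ω i) ^ (r i) ∂μpr

end PDir

/-!
Fix a topological rank `f` of the DAG; inside a complete set, `x ∈ 𝔭_y` just means `f x < f y`.
The key fact is that all parents of `v` lie in the first clique `C_l` containing `v`, i.e. the
one with `v ∈ C_l ∖ S_l`; this is where `𝔭`-perfectness enters. Listing `C_l ∖ S_l` by
increasing rank as `r_1, …, r_k`, one gets `𝔭_{r_1} = S_l`, `𝔭_{r_{i+1}} = 𝔮_{r_i}` and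
`𝔮_{r_k} = C_l`. Hence `{𝔭_v}` is `𝒮` plus the parent sets of the vertices other than the
`r_1`'s, and these list `{𝔮_v} ∖ 𝒞` without repetition because `𝔮` is injective.
-/

lemma Multiset.map_univ_val_eq_add {ι α β : Type*} [Fintype ι] [Fintype α] [DecidableEq α]
    {c : ι → α} (hc : Function.Injective c) (g : α → β) :
    (Finset.univ.val : Multiset α).map g =
      (Finset.univ.val : Multiset ι).map (g ∘ c) +
        (Finset.univ.filter (· ∉ Set.range c)).val.map g := by
  have hrange : (Finset.univ.val : Multiset α).filter (· ∈ Set.range c) =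
      (Finset.univ.val : Multiset ι).map c :=
    (Multiset.Nodup.ext (Multiset.Nodup.filter _ Finset.univ.nodup)
      (Finset.univ.nodup.map hc)).2 fun a => by simp
  rw [← Multiset.map_map, ← hrange, Finset.filter_val, ← Multiset.map_add,
    Multiset.filter_add_not]

namespace PDir

variable {V : Type} {G : SimpleGraph V} {par : V → Finset V} {f : V → ℕ} {K : ℕ}

def IsTopologicalRank (par : V → Finset V) (f : V → ℕ) : Prop :=
  ∀ u v, u ∈ par v → f u < f v

lemma IsTopologicalRank.notMem_par_self (hf : IsTopologicalRank par f) (v : V) : v ∉ par v :=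
  fun h => (hf v v h).false

lemma exists_isMaxClique_superset [Finite V] {A : Finset V} (hA : G.IsClique (A : Set V)) :
    ∃ C, IsMaxClique G C ∧ A ⊆ C := by
  obtain ⟨C, hAC, hC⟩ :=
    Finite.exists_le_maximal (p := fun D : Finset V => G.IsClique (D : Set V)) hA
  exact ⟨C, ⟨hC.1, fun D hD hCD => le_antisymm hCD (hC.2 hD hCD)⟩, hAC⟩

lemma CliqueEnum.exists_minimal_subset_C [Finite V] (o : CliqueEnum G K) {A : Finset V}
    (hA : G.IsClique (A : Set V)) :
    ∃ m, A ⊆ o.C m ∧ ∀ j < m, ¬ A ⊆ o.C j := by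
  obtain ⟨C, hC, hAC⟩ := exists_isMaxClique_superset hA
  obtain ⟨l, rfl⟩ := o.surj C hC
  obtain ⟨m, hm, hmin⟩ := exists_minimal_of_wellFoundedLT (fun m => A ⊆ o.C m) ⟨l, hAC⟩
  exact ⟨m, hm, fun j hjm hj => (hmin hj hjm.le).not_gt hjm⟩

variable [DecidableEq V]

namespace IsMoralDAG

lemma mem_par_iff_lt (hpar : IsMoralDAG G par) (hf : IsTopologicalRank par f) {s : Set V}
    (hs : G.IsClique s) {x y : V} (hx : x ∈ s) (hy : y ∈ s) : x ∈ par y ↔ f x < f y := by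
  refine ⟨hf x y, fun h => ?_⟩
  have hxy : x ≠ y := by rintro rfl; exact h.false
  exact (hpar.adj_mem x y (hs hx hy hxy)).resolve_right fun h' => (hf y x h').asymm h

lemma mem_q_iff_le (hpar : IsMoralDAG G par) (hf : IsTopologicalRank par f) {s : Set V}
    (hs : G.IsClique s) {x y : V} (hx : x ∈ s) (hy : y ∈ s) : x ∈ q par y ↔ f x ≤ f y := by
  rw [q, Finset.mem_insert, hpar.mem_par_iff_lt hf hs hx hy]
  refine ⟨by rintro (rfl | h) <;> [exact le_rfl; exact h.le], fun h => ?_⟩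
  rcases h.lt_or_eq with h | h
  · exact Or.inr h
  · by_contra! hxy
    rcases hpar.adj_mem x y (hs hx hy hxy.1) with h' | h'
    · exact (hf x y h').ne h
    · exact (hf y x h').ne h.symm

lemma eq_of_par_eq (hpar : IsMoralDAG G par) (hf : IsTopologicalRank par f) {s : Set V}
    (hs : G.IsClique s) {x y : V} (hx : x ∈ s) (hy : y ∈ s) (h : par x = par y) : x = y := by
  by_contra hxy
  rcases hpar.adj_mem x y (hs hx hy hxy) with h' | h'
  · exact hf.notMem_par_self x (h ▸ h')
  · exact hf.notMem_par_self y (h ▸ h')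

lemma q_injective (hpar : IsMoralDAG G par) : Function.Injective (q par) := by
  intro u v h
  have hu : u ∈ q par v := h ▸ Finset.mem_insert_self u _
  have hv : v ∈ q par u := h ▸ Finset.mem_insert_self v _
  by_contra huv
  exact hpar.asymm u v ((Finset.mem_insert.1 hu).resolve_left huv)
    ((Finset.mem_insert.1 hv).resolve_left (Ne.symm huv))

lemma exists_q_eq_of_isMaxClique (hpar : IsMoralDAG G par) (hf : IsTopologicalRank par f)
    {C : Finset V} (hC : IsMaxClique G C) (hne : C.Nonempty) : ∃ v, q par v = C := by
  obtain ⟨v, hv, hmax⟩ := C.exists_max_image f hne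
  refine ⟨v, (hC.2 _ (hpar.moral v) fun x hx => ?_).symm⟩
  exact (hpar.mem_q_iff_le hf hC.1 hx hv).2 (hmax x hx)

end IsMoralDAG

namespace CliqueEnum

variable (o : CliqueEnum G K)

lemma mem_sep_iff {x : V} {l : Fin K} : x ∈ o.sep l ↔ x ∈ o.C l ∧ ∃ j < l, x ∈ o.C j := by
  simp [sep]

lemma mem_sep_of_lt {x : V} {j l : Fin K} (hjl : j < l) (hj : x ∈ o.C j) (hl : x ∈ o.C l) :
    x ∈ o.sep l :=
  o.mem_sep_iff.2 ⟨hl, j, hjl, hj⟩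

lemma eq_of_mem_sdiff_sep {x : V} {l l' : Fin K} (h : x ∈ o.C l \ o.sep l)
    (h' : x ∈ o.C l' \ o.sep l') : l = l' := by
  rw [Finset.mem_sdiff] at h h'
  rcases lt_trichotomy l l' with hl | hl | hl
  · exact absurd (o.mem_sep_of_lt hl h.1 h'.1) h'.2
  · exact hl
  · exact absurd (o.mem_sep_of_lt hl h'.1 h.1) h.2

lemma Perfect.not_subset_sep {o : CliqueEnum G K} (hP : o.Perfect) {A : Finset V}
    (hA : A.Nonempty) {m : Fin K} (hmin : ∀ j < m, ¬ A ⊆ o.C j) : ¬ A ⊆ o.sep m := by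
  intro hAm
  rcases Nat.eq_zero_or_pos (m : ℕ) with h0 | hpos
  · obtain ⟨a, ha⟩ := hA
    obtain ⟨-, j, hjm, -⟩ := o.mem_sep_iff.1 (hAm ha)
    exact absurd (Fin.lt_def.1 hjm) (by omega)
  · obtain ⟨j, hjm, hsub⟩ := hP m hpos
    exact hmin j hjm (hAm.trans hsub)

variable [Finite V]

lemma exists_mem_sdiff_sep (v : V) : ∃ l, v ∈ o.C l \ o.sep l := by
  have hv : G.IsClique (({v} : Finset V) : Set V) := by
    rw [Finset.coe_singleton]; exact SimpleGraph.isClique_singleton v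
  obtain ⟨m, hm, hmin⟩ := o.exists_minimal_subset_C hv
  refine ⟨m, Finset.mem_sdiff.2 ⟨hm (Finset.mem_singleton_self v), fun hs => ?_⟩⟩
  obtain ⟨-, j, hjm, hj⟩ := o.mem_sep_iff.1 hs
  exact hmin j hjm (Finset.singleton_subset_iff.2 hj)

end CliqueEnum

section PPerfect

variable {o : CliqueEnum G K}

lemma rank_le_of_par_eq_sep (hpar : IsMoralDAG G par) (hf : IsTopologicalRank par f)
    {c u : V} {l : Fin K} (hc : c ∈ o.C l) (hpc : par c = o.sep l) (hu : u ∈ o.C l \ o.sep l) :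
    f c ≤ f u := by
  rw [Finset.mem_sdiff, ← hpc] at hu
  exact not_lt.1 fun h => hu.2 ((hpar.mem_par_iff_lt hf (o.max l).1 hu.1 hc).2 h)

variable [Finite V]

-- If the first clique `C_m` containing both `v` and a parent `x` came after `C_l`, then
-- `v ∈ S_m = 𝔭_c` for the vertex `c` given by `𝔭`-perfectness, so `f x < f v < f c` puts `x` in
-- `S_m` too, and perfectness would give an earlier clique containing `{x, v}`.
lemma par_subset_of_mem_sdiff_sep (hpar : IsMoralDAG G par) (hf : IsTopologicalRank par f)
    (ho : o.PPerfect par) {v : V} {l : Fin K} (hv : v ∈ o.C l \ o.sep l) : par v ⊆ o.C l := by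
  intro x hx
  rw [Finset.mem_sdiff] at hv
  have hxv : G.IsClique (({x, v} : Finset V) : Set V) := by
    rw [Finset.coe_pair, SimpleGraph.isClique_pair]; exact fun _ => hpar.mem_adj x v hx
  obtain ⟨m, hm, hmin⟩ := o.exists_minimal_subset_C hxv
  have hxm : x ∈ o.C m := hm (Finset.mem_insert_self x _)
  have hvm : v ∈ o.C m := hm (Finset.mem_insert_of_mem (Finset.mem_singleton_self v))
  rcases lt_trichotomy m l with hml | rfl | hlm
  · exact absurd (o.mem_sep_of_lt hml hvm hv.1) hv.2
  · exact hxm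
  · have hvs : v ∈ o.sep m := o.mem_sep_of_lt hlm hv.1 hvm
    have hxs : x ∉ o.sep m := fun hxs => ho.1.not_subset_sep ⟨x, Finset.mem_insert_self x _⟩
      hmin (Finset.insert_subset hxs (Finset.singleton_subset_iff.2 hvs))
    obtain ⟨c, hc, hpc⟩ := ho.2 m
    rw [← hpc] at hvs hxs
    exact absurd ((hpar.mem_par_iff_lt hf (o.max m).1 hxm (Finset.mem_sdiff.1 hc).1).2
      ((hf x v hx).trans (hf v c hvs))) hxs

lemma mem_par_iff_of_mem_sdiff_sep (hpar : IsMoralDAG G par) (hf : IsTopologicalRank par f)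
    (ho : o.PPerfect par) {v x : V} {l : Fin K} (hv : v ∈ o.C l \ o.sep l) :
    x ∈ par v ↔ x ∈ o.C l ∧ f x < f v :=
  ⟨fun h => ⟨par_subset_of_mem_sdiff_sep hpar hf ho hv h, hf x v h⟩, fun h =>
    (hpar.mem_par_iff_lt hf (o.max l).1 h.1 (Finset.mem_sdiff.1 hv).1).2 h.2⟩

lemma mem_q_iff_of_mem_sdiff_sep (hpar : IsMoralDAG G par) (hf : IsTopologicalRank par f)
    (ho : o.PPerfect par) {v x : V} {l : Fin K} (hv : v ∈ o.C l \ o.sep l) :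
    x ∈ q par v ↔ x ∈ o.C l ∧ f x ≤ f v := by
  have hvC := (Finset.mem_sdiff.1 hv).1
  refine ⟨fun h => ?_, fun h => (hpar.mem_q_iff_le hf (o.max l).1 h.1 hvC).2 h.2⟩
  have hx : x ∈ o.C l := by
    rcases Finset.mem_insert.1 h with rfl | h
    exacts [hvC, par_subset_of_mem_sdiff_sep hpar hf ho hv h]
  exact ⟨hx, (hpar.mem_q_iff_le hf (o.max l).1 hx hvC).1 h⟩

lemma exists_q_eq_par (hpar : IsMoralDAG G par) (hf : IsTopologicalRank par f)
    (ho : o.PPerfect par) {c w : V} {l : Fin K} (hc : c ∈ o.C l \ o.sep l)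
    (hpc : par c = o.sep l) (hw : w ∈ o.C l \ o.sep l) (hwc : w ≠ c) :
    ∃ u ∈ o.C l \ o.sep l, q par u = par w := by
  have hparw x := mem_par_iff_of_mem_sdiff_sep (x := x) hpar hf ho hw
  obtain ⟨hcC, -⟩ := Finset.mem_sdiff.1 hc
  obtain ⟨hwC, hwS⟩ := Finset.mem_sdiff.1 hw
  have hcw : c ∈ par w :=
    (hpar.adj_mem c w ((o.max l).1 hcC hwC hwc.symm)).resolve_right (hpc ▸ hwS)
  obtain ⟨u, hu, hmax⟩ := (par w).exists_max_image f ⟨c, hcw⟩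
  have huS : u ∉ o.sep l := fun h => (hmax c hcw).not_gt (hf u c (hpc ▸ h))
  have hu' : u ∈ o.C l \ o.sep l :=
    Finset.mem_sdiff.2 ⟨par_subset_of_mem_sdiff_sep hpar hf ho hw hu, huS⟩
  refine ⟨u, hu', Finset.ext fun x => ?_⟩
  rw [mem_q_iff_of_mem_sdiff_sep hpar hf ho hu', hparw]
  exact ⟨fun h => ⟨h.1, h.2.trans_lt (hf u w hu)⟩, fun h => ⟨h.1, hmax x ((hparw x).2 h)⟩⟩

lemma exists_par_eq_q (hpar : IsMoralDAG G par) (hf : IsTopologicalRank par f)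
    (ho : o.PPerfect par) {u : V} {l : Fin K} (hu : u ∈ o.C l \ o.sep l)
    (hq : ¬ IsMaxClique G (q par u)) : ∃ w ∈ o.C l \ o.sep l, par w = q par u := by
  have hqu x := mem_q_iff_of_mem_sdiff_sep (x := x) hpar hf ho hu
  have hne : (o.C l \ q par u).Nonempty := by
    rw [Finset.sdiff_nonempty]
    intro h
    exact hq (le_antisymm (fun x hx => ((hqu x).1 hx).1) h ▸ o.max l)
  obtain ⟨w, hw, hmin⟩ := (o.C l \ q par u).exists_min_image f hne
  obtain ⟨hwC, hwq⟩ := Finset.mem_sdiff.1 hw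
  have huw : f u < f w := not_le.1 fun h => hwq ((hqu w).2 ⟨hwC, h⟩)
  obtain ⟨c, hc, hpc⟩ := ho.2 l
  have hcu : f c ≤ f u := rank_le_of_par_eq_sep hpar hf (Finset.mem_sdiff.1 hc).1 hpc hu
  have hwS : w ∉ o.sep l := fun h => (hf w c (hpc ▸ h)).not_ge (hcu.trans huw.le)
  have hw' : w ∈ o.C l \ o.sep l := Finset.mem_sdiff.2 ⟨hwC, hwS⟩
  refine ⟨w, hw', Finset.ext fun x => ?_⟩
  rw [mem_par_iff_of_mem_sdiff_sep hpar hf ho hw', hqu]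
  refine ⟨fun h => ⟨h.1, not_lt.1 fun hux => ?_⟩, fun h => ⟨h.1, h.2.trans_lt huw⟩⟩
  exact (hmin x (Finset.mem_sdiff.2 ⟨h.1, fun hx => hux.not_ge ((hqu x).1 hx).2⟩)).not_gt h.2

variable {c : Fin K → V}

lemma injOn_par_compl_range (hpar : IsMoralDAG G par) (hf : IsTopologicalRank par f)
    (ho : o.PPerfect par) (hc : ∀ l, c l ∈ o.C l \ o.sep l ∧ par (c l) = o.sep l) :
    Set.InjOn par (Set.range c)ᶜ := by
  intro w₁ hw₁ w₂ hw₂ h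
  obtain ⟨l₁, hl₁⟩ := o.exists_mem_sdiff_sep w₁
  obtain ⟨l₂, hl₂⟩ := o.exists_mem_sdiff_sep w₂
  obtain ⟨u₁, hu₁, hq₁⟩ :=
    exists_q_eq_par hpar hf ho (hc l₁).1 (hc l₁).2 hl₁ fun h => hw₁ ⟨l₁, h.symm⟩
  obtain ⟨u₂, hu₂, hq₂⟩ :=
    exists_q_eq_par hpar hf ho (hc l₂).1 (hc l₂).2 hl₂ fun h => hw₂ ⟨l₂, h.symm⟩
  obtain rfl : u₁ = u₂ := hpar.q_injective (hq₁.trans (h.trans hq₂.symm))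
  obtain rfl : l₁ = l₂ := o.eq_of_mem_sdiff_sep hu₁ hu₂
  exact hpar.eq_of_par_eq hf (o.max l₁).1 (Finset.mem_sdiff.1 hl₁).1
    (Finset.mem_sdiff.1 hl₂).1 h

lemma image_par_compl_range (hpar : IsMoralDAG G par) (hf : IsTopologicalRank par f)
    (ho : o.PPerfect par) (hc : ∀ l, c l ∈ o.C l \ o.sep l ∧ par (c l) = o.sep l) :
    par '' (Set.range c)ᶜ = Set.range (q par) \ {C | IsMaxClique G C} := by
  ext A
  constructor
  · rintro ⟨w, hw, rfl⟩
    obtain ⟨l, hl⟩ := o.exists_mem_sdiff_sep w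
    obtain ⟨u, -, hq⟩ :=
      exists_q_eq_par hpar hf ho (hc l).1 (hc l).2 hl fun h => hw ⟨l, h.symm⟩
    refine ⟨⟨u, hq⟩, fun hmax => hf.notMem_par_self w ?_⟩
    rw [hmax.2 _ (hpar.moral w) (Finset.subset_insert w (par w))]
    exact Finset.mem_insert_self w _
  · rintro ⟨⟨u, rfl⟩, hnot⟩
    obtain ⟨l, hl⟩ := o.exists_mem_sdiff_sep u
    obtain ⟨w, hw, hpw⟩ := exists_par_eq_q hpar hf ho hl hnot
    refine ⟨w, ?_, hpw⟩
    rintro ⟨l', rfl⟩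
    obtain rfl : l' = l := o.eq_of_mem_sdiff_sep (hc l').1 hw
    have hu : u ∈ o.sep l' := by rw [← (hc l').2, hpw]; exact Finset.mem_insert_self u _
    exact (Finset.mem_sdiff.1 hl).2 hu

end PPerfect

theorem statement0_general {V : Type} [Fintype V] [DecidableEq V]
    (G : SimpleGraph V)
    (par : V → Finset V) (hpar : IsMoralDAG G par)
    (K : ℕ) (o : CliqueEnum G K) (ho : o.PPerfect par) :
    (∀ C : Finset V, IsMaxClique G C → ∃ v : V, q par v = C) ∧
    ((Finset.univ.val : Multiset (Fin K)).map o.sep ≤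
        (Finset.univ.val : Multiset V).map par) ∧
    ((((Finset.univ.val : Multiset V).map par) -
        ((Finset.univ.val : Multiset (Fin K)).map o.sep)).Nodup ∧
      (((((Finset.univ.val : Multiset V).map par) -
          ((Finset.univ.val : Multiset (Fin K)).map o.sep)).toFinset : Finset (Finset V)) : Set (Finset V)) =
        Set.range (q par) \ {C : Finset V | IsMaxClique G C}) := by
  obtain ⟨f, hf⟩ := hpar.acyclic
  choose c hc using ho.2
  have hc_inj : Function.Injective c := fun l l' h =>
    o.eq_of_mem_sdiff_sep (hc l).1 (h ▸ (hc l').1)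
  have hsep : (Finset.univ.val : Multiset (Fin K)).map o.sep = Finset.univ.val.map (par ∘ c) :=
    Multiset.map_congr rfl fun l _ => (hc l).2.symm
  rw [hsep, Multiset.map_univ_val_eq_add hc_inj par, add_tsub_cancel_left]
  refine ⟨fun C hC => ?_, Multiset.le_add_right _ _, ?_, ?_⟩
  · obtain ⟨l, rfl⟩ := o.surj C hC
    exact hpar.exists_q_eq_of_isMaxClique hf (o.max l) ⟨c l, (Finset.mem_sdiff.1 (hc l).1).1⟩
  · refine (Finset.univ.filter _).nodup.map_on fun x hx y hy => ?_
    exact injOn_par_compl_range hpar hf ho hc (by simpa using hx) (by simpa using hy)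
  · rw [Multiset.toFinset_map, Finset.val_toFinset, Finset.coe_image,
      ← image_par_compl_range hpar hf ho hc]
    congr 1
    ext w
    simp

/-- Lemma `CS`: for a moral DAG `𝔭` with skeleton the decomposable
graph `G` admitting a `𝔭`-perfect ordering `o`:
(i) every clique of `G` is of the form `𝔮_v`;
(ii) the separator multiset is contained in the multiset `{𝔭_v : v ∈ V}`;
(iii) the multiset difference `{𝔭_v : v ∈ V} ∖ 𝒮` has no repeated element and, as a set,
equals `{𝔮_v : v ∈ V} ∖ 𝒞`. -/
theorem statement0 {V : Type} [Fintype V] [DecidableEq V]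
    (G : SimpleGraph V) (hG : Decomposable G)
    (par : V → Finset V) (hpar : IsMoralDAG G par)
    (K : ℕ) (o : CliqueEnum G K) (ho : o.PPerfect par) :
    (∀ C : Finset V, IsMaxClique G C → ∃ v : V, q par v = C) ∧
    ((Finset.univ.val : Multiset (Fin K)).map o.sep ≤
        (Finset.univ.val : Multiset V).map par) ∧
    ((((Finset.univ.val : Multiset V).map par) -
        ((Finset.univ.val : Multiset (Fin K)).map o.sep)).Nodup ∧
      (((((Finset.univ.val : Multiset V).map par) -
          ((Finset.univ.val : Multiset (Fin K)).map o.sep)).toFinset : Finset (Finset V)) : Set (Finset V)) =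
        Set.range (q par) \ {C : Finset V | IsMaxClique G C}) :=
  statement0_general G par hpar K o ho

end PDir
end
end

section
/- Let 𝔭 be the parent function of a moral DAG with skeleton G, and suppose 𝐩 has the 𝔭-Dirichlet distribution with positive parameters α^{v|𝔭_v}_{m|k}. Then for every table r=(r_i)_{i∈ℐ} of nonnegative integers, E ∏_{i∈ℐ} 𝐩(i)^{r_i} = ∏_{v∈V} ∏_{k∈ℐ_{𝔭_v}} [ ∏_{m∈ℐ_v} (α^{v|𝔭_v}_{m|k})^{r^{𝔮_v}_{(k,m)}} / (α̃^{𝔭_v}_k)^{r^{𝔭_v}_k} ], where α̃^{𝔭_v}_k = ∑_{m∈ℐ_v} α^{v|𝔭_v}_{m|k} and all exponents of positive bases denote ascending factorials (a)^s = a(a+1)⋯(a+s−1). -/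
open MeasureTheory ProbabilityTheory Finset

noncomputable section
open scoped Classical

/-! The `𝔭`-Dirichlet factorization turns `∏ᵢ 𝐩(i)^{rᵢ}` into
`∏_v ∏_k ∏_m (𝐩^{v|𝔭_v}_{m|k})^{r^{𝔮_v}_{(k,m)}}`: since `v ∉ 𝔭_v`, the cells `i` with
`(i_{𝔭_v}, i_v) = (k, m)` are exactly those with `i_{𝔮_v} = (k, m)`. The factors indexed by
different `(v, k)` are independent, so the expectation is a product of Dirichlet moments, and
`∑_m r^{𝔮_v}_{(k,m)} = r^{𝔭_v}_k` produces the denominators. -/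

namespace PDir

section Cells

variable {V : Type} [DecidableEq V] (ι : V → Type) {par : V → Finset V} {v : V}

lemma qcell_restrict (i : Cell ι) :
    qcell ι par v (restrict ι (par v) i) (i v) = restrict ι (q par v) i := by
  funext ⟨w, hw⟩
  by_cases h : w = v
  · subst h
    simp [qcell, restrict]
  · simp [qcell, restrict, h]

lemma qcell_inj (hv : v ∉ par v) {k k' : CellOn ι (par v)} {m m' : ι v} :
    qcell ι par v k m = qcell ι par v k' m' ↔ k = k' ∧ m = m' := by
  refine ⟨fun h => ⟨?_, ?_⟩, fun h => h.1 ▸ h.2 ▸ rfl⟩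
  · funext ⟨w, hw⟩
    have hwv : w ≠ v := fun e => hv (e ▸ hw)
    simpa [qcell, hwv] using congrFun h ⟨w, mem_insert_of_mem hw⟩
  · simpa [qcell] using congrFun h ⟨v, mem_insert_self v _⟩

variable [Fintype V] [∀ v, Fintype (ι v)] [∀ v, DecidableEq (ι v)]

lemma margCount_qcell (hv : v ∉ par v) (r : Cell ι → ℕ) (k : CellOn ι (par v)) (m : ι v) :
    margCount ι r (q par v) (qcell ι par v k m) =
      ∑ i, if restrict ι (par v) i = k ∧ i v = m then r i else 0 := by
  simp only [margCount, ← qcell_restrict, qcell_inj ι hv]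

lemma sum_margCount_qcell (hv : v ∉ par v) (r : Cell ι → ℕ) (k : CellOn ι (par v)) :
    ∑ m, margCount ι r (q par v) (qcell ι par v k m) = margCount ι r (par v) k := by
  simp only [margCount_qcell ι hv]
  rw [Finset.sum_comm, margCount]
  refine Finset.sum_congr rfl fun i _ => ?_
  by_cases hk : restrict ι (par v) i = k <;> simp [hk]

lemma prod_pow_eq_prod_pow_margCount_qcell (hv : v ∉ par v) (r : Cell ι → ℕ)
    (f : CellOn ι (par v) → ι v → ℝ) :
    ∏ i, f (restrict ι (par v) i) (i v) ^ r i =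
      ∏ k, ∏ m, f k m ^ margCount ι r (q par v) (qcell ι par v k m) := by
  simp only [margCount_qcell ι hv, ← Finset.prod_pow_eq_pow_sum]
  rw [Finset.prod_congr rfl fun k _ => Finset.prod_comm, Finset.prod_comm]
  refine Finset.prod_congr rfl fun i _ => ?_
  simp [pow_ite, ite_and, Finset.prod_ite_eq]

end Cells

section Tables

variable {V : Type} [Fintype V] [DecidableEq V]
  (ι : V → Type) [∀ v, Fintype (ι v)] [∀ v, DecidableEq (ι v)]

lemma prod_pow_eq_prod_pow_margCount_of_factorization {par : V → Finset V}
    (hv : ∀ v, v ∉ par v) (P : Cell ι → ℝ) (φ : (v : V) → CellOn ι (par v) → ι v → ℝ)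
    (hP : ∀ i, P i = ∏ v, φ v (restrict ι (par v) i) (i v)) (r : Cell ι → ℕ) :
    ∏ i, P i ^ r i =
      ∏ v, ∏ k, ∏ m, φ v k m ^ margCount ι r (q par v) (qcell ι par v k m) := by
  simp_rw [hP, ← Finset.prod_pow]
  rw [Finset.prod_comm]
  exact Finset.prod_congr rfl fun v _ =>
    prod_pow_eq_prod_pow_margCount_qcell ι (hv v) r (φ v)

lemma measurable_marg {Ω : Type} [MeasurableSpace Ω] {p : Ω → Cell ι → ℝ}
    (hp : ∀ i, Measurable fun ω => p ω i) (D : Finset V) (n : CellOn ι D) :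
    Measurable fun ω => marg ι (p ω) D n :=
  Finset.measurable_sum _ fun j _ => Measurable.ite (MeasurableSet.const _) (hp j) measurable_const

lemma measurable_condp {Ω : Type} [MeasurableSpace Ω] {p : Ω → Cell ι → ℝ}
    (hp : ∀ i, Measurable fun ω => p ω i) (par : V → Finset V) (v : V) (k : CellOn ι (par v)) :
    Measurable fun ω => condp ι (p ω) par v k :=
  measurable_pi_lambda _ fun _ => (measurable_marg ι hp _ _).div (measurable_marg ι hp _ _)

end Tables

lemma integral_prod_prod_pow_of_iIndepFun {Ω κ : Type} [MeasurableSpace Ω] {μ : Measure Ω}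
    [Fintype κ] {M : κ → Type} [∀ x, Fintype (M x)] {X : (x : κ) → Ω → M x → ℝ}
    (hX : iIndepFun X μ) (hXm : ∀ x, Measurable (X x)) {β : (x : κ) → M x → ℝ}
    (hβ : ∀ x, DirMoments μ (X x) (β x)) (z : (x : κ) → M x → ℕ) :
    ∫ ω, ∏ x, ∏ m, X x ω m ^ z x m ∂μ =
      ∏ x, (∏ m, ascFac (β x m) (z x m)) / ascFac (∑ m, β x m) (∑ m, z x m) := by
  rw [hX.integral_fun_prod_comp (f := fun x y => ∏ m, y m ^ z x m)
    (fun x => (hXm x).aemeasurable) (fun x => (by fun_prop : Measurable _).aestronglyMeasurable)]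
  exact Finset.prod_congr rfl fun x _ => (hβ x).2 (z x)

theorem statement2_general {V Ω : Type} [Fintype V] [DecidableEq V] [MeasurableSpace Ω]
    (μpr : Measure Ω)
    (G : SimpleGraph V)
    (ι : V → Type) [∀ v, Fintype (ι v)] [∀ v, DecidableEq (ι v)]
    (par : V → Finset V) (hpar : IsMoralDAG G par)
    (p : Ω → Cell ι → ℝ) (hp : IsRandProb ι μpr p)
    (α : (v : V) → CellOn ι (par v) → ι v → ℝ)
    (hdir : IsPDirichlet ι μpr p par α) :
    ∀ r : Cell ι → ℕ,
      moment ι μpr p r =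
        ∏ v : V, ∏ k : CellOn ι (par v),
          (∏ m : ι v, ascFac (α v k m) (margCount ι r (q par v) (qcell ι par v k m))) /
            ascFac (∑ m : ι v, α v k m) (margCount ι r (par v) k) := by
  intro r
  obtain ⟨hfactor, hindep, hmoments⟩ := hdir
  have hv : ∀ v, v ∉ par v := fun v h => hpar.asymm v v h h
  calc moment ι μpr p r
      = ∫ ω, ∏ x : Σ v, CellOn ι (par v), ∏ m,
          condp ι (p ω) par x.1 x.2 m ^ margCount ι r (q par x.1) (qcell ι par x.1 x.2 m)
            ∂μpr := by
        refine integral_congr_ae (hfactor.mono fun ω hω => ?_)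
        dsimp only
        rw [prod_pow_eq_prod_pow_margCount_of_factorization ι hv _ _ hω, Fintype.prod_sigma]
    _ = _ := integral_prod_prod_pow_of_iIndepFun hindep
          (fun x => measurable_condp ι hp.1 par x.1 x.2) (fun x => hmoments x.1 x.2) _
    _ = _ := by
        rw [Fintype.prod_sigma]
        simp only [sum_margCount_qcell ι (hv _)]

/-- moments of the `𝔭`-Dirichlet distribution. -/
theorem statement2 {V Ω : Type} [Fintype V] [DecidableEq V] [MeasurableSpace Ω]
    (μpr : Measure Ω) [IsProbabilityMeasure μpr]
    (G : SimpleGraph V) (hG : Decomposable G)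
    (ι : V → Type) [∀ v, Fintype (ι v)] [∀ v, DecidableEq (ι v)]
    (hcard : ∀ v, 2 ≤ Fintype.card (ι v))
    (par : V → Finset V) (hpar : IsMoralDAG G par)
    (p : Ω → Cell ι → ℝ) (hp : IsRandProb ι μpr p)
    (α : (v : V) → CellOn ι (par v) → ι v → ℝ)
    (hdir : IsPDirichlet ι μpr p par α) :
    ∀ r : Cell ι → ℕ,
      moment ι μpr p r =
        ∏ v : V, ∏ k : CellOn ι (par v),
          (∏ m : ι v, ascFac (α v k m) (margCount ι r (q par v) (qcell ι par v k m))) /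
            ascFac (∑ m : ι v, α v k m) (margCount ι r (par v) k) :=
  statement2_general μpr G ι par hpar p hp α hdir

end PDir
end
end

section
/- Let n ≥ 2 and let F be a positive function on the set of n-tuples of nonnegative integers such that F(0,…,0)=1 and F(x) = ∑_{i=1}^n F(x+e_i) for all x, where e_i is the i-th standard unit vector. Assume there exist positive functions h_1,…,h_n on the nonnegative integers such that for all distinct p,q∈{1,…,n} and all x, F(x+e_p)/F(x+e_q) = h_p(x_p)/h_q(x_q). Then there exists a vector A=(A_1,…,A_n) of positive real numbers such that either F(x) = ∏_{i=1}^n (A_i)^{x_i} / (A_1+⋯+A_n)^{x_1+⋯+x_n} for all x (where (a)^s = a(a+1)⋯(a+s−1) is the ascending factorial), or F(x) = ∏_{i=1}^n A_i^{x_i} for all x (ordinary powers, in which case A_1+⋯+A_n = 1). -/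
/-!
Put `S x = ∑ᵢ hᵢ (xᵢ)`. Clearing denominators in the separation identity and summing over the
directions turns the sum rule into the recursion `F (x + e_q) * S x = F x * h_q (x_q)`, which
determines `F` from `F 0 = 1`. Reaching `x + e_p + e_q` from `x` in the two possible orders
forces `S (x + e_p) = S (x + e_q)`, i.e. every `hᵢ` has the same constant increment `c`, so
`hᵢ s = aᵢ + c s` with `c ≥ 0` by positivity. The ordinary powers of `aᵢ / ∑ a` (for `c = 0`) and
the Dirichlet moments with `Aᵢ = aᵢ / c` (for `c > 0`) satisfy the same recursion.
-/

noncomputable section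

namespace PDir

lemma ascFac_succ (a : ℝ) (s : ℕ) : ascFac a (s + 1) = ascFac a s * (a + s) :=
  Finset.prod_range_succ _ _

section MultiIndex

variable {ι : Type*} [Fintype ι] [DecidableEq ι]

lemma sum_add_single_one (x : ι → ℕ) (q : ι) :
    ∑ i, (x + Pi.single q 1 : ι → ℕ) i = ∑ i, x i + 1 := by
  simp [Finset.sum_add_distrib]

lemma prod_apply_add_single {M : Type*} [CommMonoid M] {g a : ι → ℕ → M}
    (hg : ∀ i s, g i (s + 1) = g i s * a i s) (x : ι → ℕ) (q : ι) :
    ∏ i, g i ((x + Pi.single q 1 : ι → ℕ) i) = (∏ i, g i (x i)) * a q (x q) := by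
  rw [← Finset.prod_ite_eq_of_mem' Finset.univ q (fun _ => a q (x q)) (Finset.mem_univ q),
    ← Finset.prod_mul_distrib]
  refine Fintype.prod_congr _ _ fun i => ?_
  rcases eq_or_ne i q with rfl | hi
  · simp [hg]
  · simp [hi]

lemma sum_apply_add_single {M : Type*} [AddCommGroup M] (g : ι → ℕ → M) (x : ι → ℕ) (q : ι) :
    ∑ i, g i ((x + Pi.single q 1 : ι → ℕ) i) = ∑ i, g i (x i) + (g q (x q + 1) - g q (x q)) := by
  rw [← sub_eq_iff_eq_add', ← Finset.sum_sub_distrib,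
    Fintype.sum_eq_single q fun i hi => by simp [hi]]
  simp

theorem eq_of_add_single_eq {α : Type*} {F G : (ι → ℕ) → α}
    (step : (ι → ℕ) → ι → α → α) (h0 : F 0 = G 0)
    (hF : ∀ x q, F (x + Pi.single q 1) = step x q (F x))
    (hG : ∀ x q, G (x + Pi.single q 1) = step x q (G x)) : F = G := by
  funext x
  induction x using WellFoundedLT.induction with
  | _ x ih =>
    obtain rfl | ⟨q, hq⟩ := eq_or_ne x 0 |>.imp id Function.ne_iff.mp
    · exact h0
    have hle : Pi.single q 1 ≤ x := fun i => by
      rcases eq_or_ne i q with rfl | hi <;> simp_all [Nat.one_le_iff_ne_zero]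
    obtain ⟨y, rfl⟩ : ∃ y, x = y + Pi.single q 1 :=
      ⟨x - Pi.single q 1, (tsub_add_cancel_of_le hle).symm⟩
    rw [hF, hG, ih y (lt_add_of_pos_right y (by simp))]

lemma prod_ascFac_div_ascFac_add_single (A : ι → ℝ) (x : ι → ℕ) (q : ι) :
    (∏ i, ascFac (A i) ((x + Pi.single q 1 : ι → ℕ) i)) /
        ascFac (∑ i, A i) (∑ i, (x + Pi.single q 1 : ι → ℕ) i) =
      (∏ i, ascFac (A i) (x i)) / ascFac (∑ i, A i) (∑ i, x i) *
        ((A q + x q) / (∑ i, A i + ∑ i, x i)) := by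
  rw [prod_apply_add_single (fun i s => ascFac_succ (A i) s), sum_add_single_one, ascFac_succ,
    div_mul_div_comm]

end MultiIndex

section Separation

variable {ι : Type*} [Fintype ι] [DecidableEq ι] {F : (ι → ℕ) → ℝ} {h : ι → ℕ → ℝ}

lemma add_single_mul_sum_eq
    (hsum : ∀ x, F x = ∑ i, F (x + Pi.single i 1))
    (hcross : ∀ p q (x : ι → ℕ),
      F (x + Pi.single p 1) * h q (x q) = F (x + Pi.single q 1) * h p (x p))
    (x : ι → ℕ) (q : ι) :
    F (x + Pi.single q 1) * ∑ i, h i (x i) = F x * h q (x q) := by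
  rw [hsum x, Finset.mul_sum, Finset.sum_mul]
  exact Fintype.sum_congr _ _ fun i => (hcross i q x).symm

lemma sum_apply_add_single_eq_of_ne (hFpos : ∀ x, 0 < F x)
    (hcross : ∀ p q (x : ι → ℕ),
      F (x + Pi.single p 1) * h q (x q) = F (x + Pi.single q 1) * h p (x p))
    (hrec : ∀ x q, F (x + Pi.single q 1) * ∑ i, h i (x i) = F x * h q (x q))
    {p q : ι} (hpq : p ≠ q) (x : ι → ℕ) :
    ∑ i, h i ((x + Pi.single p 1 : ι → ℕ) i) = ∑ i, h i ((x + Pi.single q 1 : ι → ℕ) i) := by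
  have hp : (x + Pi.single q 1 : ι → ℕ) p = x p := by simp [hpq]
  have hq : (x + Pi.single p 1 : ι → ℕ) q = x q := by simp [hpq.symm]
  refine mul_left_cancel₀ (hFpos (x + Pi.single p 1 + Pi.single q 1)).ne' ?_
  calc F (x + Pi.single p 1 + Pi.single q 1) * ∑ i, h i ((x + Pi.single p 1 : ι → ℕ) i)
      = F (x + Pi.single p 1) * h q (x q) := by rw [hrec, hq]
    _ = F (x + Pi.single q 1) * h p (x p) := hcross p q x
    _ = F (x + Pi.single p 1 + Pi.single q 1) * ∑ i, h i ((x + Pi.single q 1 : ι → ℕ) i) := by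
      rw [add_right_comm, hrec, hp]

lemma increment_eq_of_ne
    (hS : ∀ p q : ι, p ≠ q → ∀ x : ι → ℕ,
      ∑ i, h i ((x + Pi.single p 1 : ι → ℕ) i) = ∑ i, h i ((x + Pi.single q 1 : ι → ℕ) i))
    {p q : ι} (hpq : p ≠ q) (s t : ℕ) :
    h p (s + 1) - h p s = h q (t + 1) - h q t := by
  have key := hS p q hpq (Pi.single p s + Pi.single q t)
  simp only [sum_apply_add_single, add_right_inj] at key
  simpa [hpq, hpq.symm] using key

end Separation

lemma exists_const_of_eq_of_ne {ι α β : Type*} [Nontrivial ι] (d : ι → α → β)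
    (hd : ∀ p q, p ≠ q → ∀ s t, d p s = d q t) (a : α) : ∃ c, ∀ p s, d p s = c := by
  obtain ⟨p, q, hpq⟩ := exists_pair_ne ι
  refine ⟨d q a, fun r s => ?_⟩
  rcases eq_or_ne r q with rfl | hr
  · exact (hd r p hpq.symm s a).trans (hd p r hpq a a)
  · exact hd r q hr s a

lemma exists_eq_add_mul_of_increment_eq {ι : Type*} [Nontrivial ι] {h : ι → ℕ → ℝ}
    (hinc : ∀ p q, p ≠ q → ∀ s t, h p (s + 1) - h p s = h q (t + 1) - h q t) :
    ∃ (a : ι → ℝ) (c : ℝ), h = fun i (s : ℕ) => a i + c * s := by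
  obtain ⟨c, hc⟩ := exists_const_of_eq_of_ne (fun i s => h i (s + 1) - h i s) hinc 0
  refine ⟨fun i => h i 0, c, funext₂ fun i s => ?_⟩
  induction s with
  | zero => simp
  | succ s ih => push_cast; linarith [hc i s]

lemma nonneg_of_forall_add_mul_pos {a c : ℝ} (h : ∀ s : ℕ, 0 < a + c * s) : 0 ≤ c := by
  by_contra! hc
  obtain ⟨s, hs⟩ := exists_nat_gt (a / -c)
  rw [div_lt_iff₀ (neg_pos.mpr hc)] at hs
  linarith [h s]

section Solution

variable {ι : Type*} [Fintype ι] [DecidableEq ι] {F : (ι → ℕ) → ℝ} {a : ι → ℝ}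

lemma eq_prod_pow_of_add_single (hF0 : F 0 = 1) (ha : ∑ i, a i ≠ 0)
    (hrec : ∀ x q, F (x + Pi.single q 1) * ∑ i, a i = F x * a q) :
    F = fun x => ∏ i, (a i / ∑ j, a j) ^ x i := by
  refine eq_of_add_single_eq (fun x q v => v * (a q / ∑ j, a j)) (by simpa using hF0)
    (fun x q => ?_) fun x q => prod_apply_add_single (fun i s => pow_succ _ s) x q
  rw [mul_div_assoc', eq_div_iff ha, hrec]

lemma eq_prod_ascFac_div_ascFac_of_add_single (hF0 : F 0 = 1) (ha : ∀ i, 0 < a i) {c : ℝ}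
    (hc : 0 < c)
    (hrec : ∀ x q, F (x + Pi.single q 1) * ∑ i, (a i + c * x i) = F x * (a q + c * x q)) :
    F = fun x => (∏ i, ascFac (a i / c) (x i)) / ascFac (∑ i, a i / c) (∑ i, x i) := by
  refine eq_of_add_single_eq (fun x q v => v * ((a q / c + x q) / (∑ i, a i / c + ∑ i, x i)))
    (by simp [hF0, ascFac]) (fun x q => ?_)
    fun x q => prod_ascFac_div_ascFac_add_single _ x q
  have hsum : 0 < ∑ i, (a i + c * x i) :=
    Finset.sum_pos (fun i _ => by have := ha i; positivity) ⟨q, Finset.mem_univ q⟩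
  rw [(eq_div_iff hsum.ne').2 (hrec x q), Finset.sum_add_distrib, ← Finset.mul_sum,
    ← Finset.sum_div]
  push_cast
  field_simp

end Solution

/-- Lemma `gammas`: a positive function on `ℕ^n` with `F(0) = 1`,
satisfying `F(x) = ∑ᵢ F(x + eᵢ)` and the separation identity
`F(x+eₚ)/F(x+e_q) = hₚ(xₚ)/h_q(x_q)`, is either a Dirichlet moment function or a
product of ordinary powers. -/
theorem statement15 (n : ℕ) (hn : 2 ≤ n)
    (F : (Fin n → ℕ) → ℝ) (hFpos : ∀ x, 0 < F x) (hF0 : F 0 = 1)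
    (hsum : ∀ x : Fin n → ℕ, F x = ∑ i : Fin n, F (x + Pi.single i 1))
    (hsep : ∃ h : Fin n → ℕ → ℝ, (∀ i s, 0 < h i s) ∧
      ∀ p q : Fin n, p ≠ q → ∀ x : Fin n → ℕ,
        F (x + Pi.single p 1) / F (x + Pi.single q 1) = h p (x p) / h q (x q)) :
    ∃ A : Fin n → ℝ, (∀ i, 0 < A i) ∧
      ((∀ x : Fin n → ℕ,
          F x = (∏ i, ascFac (A i) (x i)) / ascFac (∑ i, A i) (∑ i, x i)) ∨
        ((∑ i, A i) = 1 ∧ ∀ x : Fin n → ℕ, F x = ∏ i, (A i) ^ (x i))) := by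
  obtain ⟨h, hpos, hratio⟩ := hsep
  have : Nontrivial (Fin n) := Fin.nontrivial_iff_two_le.mpr hn
  have hcross : ∀ p q (x : Fin n → ℕ),
      F (x + Pi.single p 1) * h q (x q) = F (x + Pi.single q 1) * h p (x p) := by
    intro p q x
    rcases eq_or_ne p q with rfl | hpq
    · rfl
    · rw [mul_comm (F (x + Pi.single q 1)), ← div_eq_div_iff (hFpos _).ne' (hpos q _).ne',
        hratio p q hpq x]
  have hrec := add_single_mul_sum_eq hsum hcross
  obtain ⟨a, c, rfl⟩ := exists_eq_add_mul_of_increment_eq fun p q ↦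
    increment_eq_of_ne (fun p q hpq ↦ sum_apply_add_single_eq_of_ne hFpos hcross hrec hpq)
  have ha : ∀ i, 0 < a i := fun i => by simpa using hpos i 0
  rcases (nonneg_of_forall_add_mul_pos (hpos ⟨0, by omega⟩)).eq_or_lt with rfl | hc
  · have ha_sum : 0 < ∑ j, a j := Finset.sum_pos (fun i _ => ha i) Finset.univ_nonempty
    refine ⟨fun i => a i / ∑ j, a j, fun i => div_pos (ha i) ha_sum, Or.inr ⟨?_, ?_⟩⟩
    · rw [← Finset.sum_div, div_self ha_sum.ne']
    · exact congrFun (eq_prod_pow_of_add_single hF0 ha_sum.ne' fun x q => by simpa using hrec x q)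
  · refine ⟨fun i => a i / c, fun i => div_pos (ha i) hc, Or.inl ?_⟩
    exact congrFun (eq_prod_ascFac_div_ascFac_of_add_single hF0 ha hc hrec)

end PDir
end
end
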